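/- Let c ≥ 0 be an integer. If c ≡ 0 (mod 3) or c ≡ 1 (mod 3), then R_H(0,0,c) = {r - (c² - c)/3 : r ∈ R_H(0,0,0)}; if c ≡ 2 (mod 3), then R_H(0,0,c) = {r - (c² - c + 1)/3 : r ∈ R_H(1,1,0)}. (In each case the indicated quotient is an integer.) -/

import Mathlib

def H1 : ℤ × ℤ × ℤ → ℤ × ℤ × ℤ := fun t => (-t.1 + 1 + t.2.1 + t.2.2, t.2.1, t.2.2)
def H2 : ℤ × ℤ × ℤ → ℤ × ℤ × ℤ := fun t => (t.1, -t.2.1 + 1 + t.2.2 + t.1, t.2.2)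
def H3 : ℤ × ℤ × ℤ → ℤ × ℤ × ℤ := fun t => (t.1, t.2.1, -t.2.2 + 1 + t.1 + t.2.1)

/-- One step of the dynamics: apply one of `H1`, `H2`, `H3`. -/
def HStep (s t : ℤ × ℤ × ℤ) : Prop := t = H1 s ∨ t = H2 s ∨ t = H3 s

/-- The set of triples reachable from `(a,b,c)` by finitely many applications
of `H1`, `H2`, `H3` in any order. -/
def TH (a b c : ℤ) : Set (ℤ × ℤ × ℤ) := {t | Relation.ReflTransGen HStep (a, b, c) t}

/-- The set of integers represented as a component of a triple in `TH a b c`. -/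
def RH (a b c : ℤ) : Set ℤ :=
  {r | ∃ t ∈ TH a b c, r = t.1 ∨ r = t.2.1 ∨ r = t.2.2}


/-! Each `Hᵢ` is an involution commuting with the diagonal translation `t ↦ k +ᵥ t`, so reachability
is an equivalence relation and `R_H(k+a, k+b, k+c) = k + R_H(a, b, c)`. The path
`(0,0,c+3) → (0,0,-c-2) → (-c-1,0,-c-2) → (-c-1,-2c-2,-c-2) → (-2c-2,-2c-2,-c-2)` ends at a
translate of `(0,0,c)`, so `R_H(0,0,c+3) = R_H(0,0,c) - (2c+2)`. Iterating in both directions reduces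
`c` to `c % 3`, and `(0,0,1) ~ (0,0,0)`, `(0,0,2) ~ (0,0,-1) = (1,1,0) - 1` settle the residues. -/

open Pointwise

lemma H1_involutive : Function.Involutive H1 := fun t => by simp only [H1]; ring_nf
lemma H2_involutive : Function.Involutive H2 := fun t => by simp only [H2]; ring_nf
lemma H3_involutive : Function.Involutive H3 := fun t => by simp only [H3]; ring_nf

instance : Std.Symm HStep where
  symm s t := by
    rintro (rfl | rfl | rfl)
    · exact Or.inl (H1_involutive s).symm
    · exact Or.inr (Or.inl (H2_involutive s).symm)
    · exact Or.inr (Or.inr (H3_involutive s).symm)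

lemma RH_eq_of_mem_TH {a b c x y z : ℤ} (h : (x, y, z) ∈ TH a b c) : RH a b c = RH x y z := by
  have hTH : TH a b c = TH x y z := by
    ext t
    exact ⟨(Std.Symm.symm _ _ h : Relation.ReflTransGen HStep _ _).trans, h.trans⟩
  simp only [RH, hTH]

lemma RH_eq_of_HStep {a b c x y z : ℤ} (h : HStep (a, b, c) (x, y, z)) : RH a b c = RH x y z :=
  RH_eq_of_mem_TH (.single h)

lemma HStep_vadd (k : ℤ) {s t : ℤ × ℤ × ℤ} (h : HStep s t) : HStep (k +ᵥ s) (k +ᵥ t) := by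
  obtain ⟨x, y, z⟩ := s
  rcases h with rfl | rfl | rfl
  · exact Or.inl (by simp only [H1, Prod.vadd_mk, vadd_eq_add]; ring_nf)
  · exact Or.inr (Or.inl (by simp only [H2, Prod.vadd_mk, vadd_eq_add]; ring_nf))
  · exact Or.inr (Or.inr (by simp only [H3, Prod.vadd_mk, vadd_eq_add]; ring_nf))

lemma vadd_mem_TH (k : ℤ) {a b c : ℤ} {t : ℤ × ℤ × ℤ} (h : t ∈ TH a b c) :
    k +ᵥ t ∈ TH (k + a) (k + b) (k + c) :=
  Relation.ReflTransGen.lift (k +ᵥ ·) (fun _ _ => HStep_vadd k) _ _ h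

lemma vadd_mem_RH (k : ℤ) {a b c r : ℤ} (h : r ∈ RH a b c) :
    k + r ∈ RH (k + a) (k + b) (k + c) := by
  obtain ⟨t, ht, hr⟩ := h
  refine ⟨k +ᵥ t, vadd_mem_TH k ht, ?_⟩
  rcases hr with rfl | rfl | rfl <;> simp

lemma RH_add (k a b c : ℤ) : RH (k + a) (k + b) (k + c) = k +ᵥ RH a b c := by
  ext r
  refine ⟨fun hr => ⟨-k + r, ?_, by simp⟩, fun ⟨s, hs, hr⟩ => hr ▸ vadd_mem_RH k hs⟩
  simpa using vadd_mem_RH (-k) hr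

lemma mem_TH_zero_zero_add_three (c : ℤ) : (-2 * c - 2, -2 * c - 2, -c - 2) ∈ TH 0 0 (c + 3) := by
  have h₁ : HStep (0, 0, c + 3) (0, 0, -c - 2) := Or.inr (Or.inr (by simp only [H3]; ring_nf))
  have h₂ : HStep (0, 0, -c - 2) (-c - 1, 0, -c - 2) := Or.inl (by simp only [H1]; ring_nf)
  have h₃ : HStep (-c - 1, 0, -c - 2) (-c - 1, -2 * c - 2, -c - 2) :=
    Or.inr (Or.inl (by simp only [H2]; ring_nf))
  have h₄ : HStep (-c - 1, -2 * c - 2, -c - 2) (-2 * c - 2, -2 * c - 2, -c - 2) :=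
    Or.inl (by simp only [H1]; ring_nf)
  exact (((Relation.ReflTransGen.single h₁).tail h₂).tail h₃).tail h₄

lemma RH_zero_zero_add_three (c : ℤ) : RH 0 0 (c + 3) = (-2 * c - 2) +ᵥ RH 0 0 c := by
  rw [RH_eq_of_mem_TH (mem_TH_zero_zero_add_three c), ← RH_add]
  ring_nf

/-- The shift is `((c + 3q)² - (c + 3q) - (c² - c)) / 3`. -/
lemma RH_zero_zero_add_three_mul (c q : ℤ) :
    RH 0 0 (c + 3 * q) = -(q * (2 * c + 3 * q - 1)) +ᵥ RH 0 0 c := by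
  induction q using Int.induction_on with
  | zero => simp
  | succ i ih =>
    rw [show c + 3 * (i + 1) = c + 3 * i + 3 by ring, RH_zero_zero_add_three, ih, vadd_vadd]
    ring_nf
  | pred i ih =>
    rw [show c + 3 * -(i : ℤ) = c + 3 * (-i - 1) + 3 by ring, RH_zero_zero_add_three,
      ← eq_neg_vadd_iff] at ih
    rw [ih, vadd_vadd]
    ring_nf

lemma RH_zero_zero_one : RH 0 0 1 = RH 0 0 0 :=
  (RH_eq_of_HStep (Or.inr (Or.inr (by simp [H3])))).symm

lemma RH_zero_zero_two : RH 0 0 2 = -1 +ᵥ RH 1 1 0 := by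
  rw [RH_eq_of_HStep (x := 0) (y := 0) (z := -1) (Or.inr (Or.inr (by simp [H3]))), ← RH_add]
  norm_num

lemma image_sub_eq_neg_vadd (S : Set ℤ) (m : ℤ) : (fun r => r - m) '' S = -m +ᵥ S := by
  simp only [← Set.image_vadd, vadd_eq_add, neg_add_eq_sub]

theorem RH_00c_towers_general (c : ℤ) :
    (c % 3 = 0 ∨ c % 3 = 1 →
      RH 0 0 c = (fun r : ℤ => r - (c ^ 2 - c) / 3) '' RH 0 0 0) ∧
    (c % 3 = 2 →
      RH 0 0 c = (fun r : ℤ => r - (c ^ 2 - c + 1) / 3) '' RH 1 1 0) := by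
  obtain ⟨r, q, hr, rfl⟩ : ∃ r q, c % 3 = r ∧ c = r + 3 * q :=
    ⟨_, c / 3, rfl, (Int.emod_add_mul_ediv c 3).symm⟩
  simp only [hr, image_sub_eq_neg_vadd, RH_zero_zero_add_three_mul]
  refine ⟨fun h => ?_, fun h => ?_⟩
  · have hRH : RH 0 0 r = RH 0 0 0 := by
      rcases h with rfl | rfl
      exacts [rfl, RH_zero_zero_one]
    rw [hRH]
    congr 2
    exact (Int.ediv_eq_of_eq_mul_left (by norm_num) (by rcases h with rfl | rfl <;> ring)).symm
  · subst h
    rw [RH_zero_zero_two, vadd_vadd]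
    congr 1
    rw [Int.ediv_eq_of_eq_mul_left (by norm_num) (by ring : (2 + 3 * q) ^ 2 - (2 + 3 * q) + 1 =
      (q * (2 * 2 + 3 * q - 1) + 1) * 3)]
    ring

theorem RH_00c_towers (c : ℤ) (hc : 0 ≤ c) :
    (c % 3 = 0 ∨ c % 3 = 1 →
      RH 0 0 c = (fun r : ℤ => r - (c ^ 2 - c) / 3) '' RH 0 0 0) ∧
    (c % 3 = 2 →
      RH 0 0 c = (fun r : ℤ => r - (c ^ 2 - c + 1) / 3) '' RH 1 1 0) :=
  RH_00c_towers_general c
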